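/- Let A ∈ M_n(ℝ), B ∈ M_{n,m}(ℝ), T > 0, x⁰ ∈ ℝⁿ, and v ∈ L²((0,T),ℝ^m). Let x be the solution of x′ = Ax + Bv with x(0) = x⁰, and suppose that for every solution y of −y′ = A*y on [0,T] one has ⟨y(0), x⁰⟩ + ∫₀^T ⟨y(t), Bv(t)⟩ dt = 0. Then x(T) = 0. -/

import Mathlib

inductive PTree : Type
  | node : List PTree → PTree

namespace PTree

instance : Inhabited PTree := ⟨node []⟩

/-- the single-leaf tree ∘ -/
def leaf : PTree := node []

/-- number of leaves ‖b‖ -/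
def leaves : PTree → ℕ
  | node ts => if ts.isEmpty then 1 else (ts.attach.map fun t => leaves t.1).sum
decreasing_by simp only [PTree.node.sizeOf_spec]; have := List.sizeOf_lt_of_mem t.2; omega


/-- number of internal vertices |b| -/
def internals : PTree → ℕ
  | node ts => if ts.isEmpty then 0 else 1 + (ts.attach.map fun t => internals t.1).sum
decreasing_by simp only [PTree.node.sizeOf_spec]; have := List.sizeOf_lt_of_mem t.2; omega


/-- total number of vertices N(b) -/
def Ntot (b : PTree) : ℕ := b.leaves + b.internals

/-- non-degenerate: every internal vertex has at least two children -/
def ND : PTree → Prop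
  | node ts => ts.isEmpty ∨ (2 ≤ ts.length ∧ ∀ t ∈ ts.attach, ND t.1)
decreasing_by simp only [PTree.node.sizeOf_spec]; have := List.sizeOf_lt_of_mem t.2; omega


/-- the list of numbers of children of the internal vertices of b -/
def childCounts : PTree → List ℕ
  | node ts => if ts.isEmpty then [] else ts.length :: (ts.attach.map fun t => childCounts t.1).flatten
decreasing_by simp only [PTree.node.sizeOf_spec]; have := List.sizeOf_lt_of_mem t.2; omega


mutual
/-- graft trees from the list E onto the successive leaves of b (left to right);
returns the grafted tree together with the unused suffix of E. -/
def graft : PTree → List PTree → PTree × List PTree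
  | node ts, E =>
    if ts.isEmpty then (E.headI, E.tail)
    else
      let p := graftL ts E
      (node p.1, p.2)
/-- graft trees from the list E onto the leaves of the forest l -/
def graftL : List PTree → List PTree → List PTree × List PTree
  | [], E => ([], E)
  | t :: ts, E =>
    let p := graft t E
    let q := graftL ts p.2
    (p.1 :: q.1, q.2)
end

/-- E ∝ b : graft the tuple E onto the leaves of b -/
def graftT (b : PTree) (E : List PTree) : PTree := (b.graft E).1

mutual
/-- the list of all decompositions b = E ∝ c, as pairs (c, E) -/
def decomps : PTree → List (PTree × List PTree)
  | node ts =>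
    (leaf, [node ts]) ::
      (if ts.isEmpty then []
       else (decompsL ts).map fun p => (node p.1, p.2))
/-- decompositions of a forest: pairs (list of bases, concatenated grafted tuples) -/
def decompsL : List PTree → List (List PTree × List PTree)
  | [] => [([], [])]
  | t :: ts =>
    (decomps t).flatMap fun p => (decompsL ts).map fun q => (p.1 :: q.1, p.2 ++ q.2)
end

theorem leaves_pos : ∀ b : PTree, 0 < b.leaves
  | node ts => by
    show 0 < leaves (node ts)
    unfold leaves
    split
    · exact one_pos
    · rename_i h
      have hne : ts ≠ [] := by simpa [List.isEmpty_iff] using h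
      obtain ⟨t, ts', rfl⟩ := List.exists_cons_of_ne_nil hne
      have := leaves_pos t
      simp only [List.attach_cons, List.map_cons, List.sum_cons]
      positivity

end PTree

open TensorProduct

/-- non-degenerate planar trees -/
def NDTree := {b : PTree // b.ND}

/-- the tensor algebra ℱ over the span 𝒜 of non-degenerate planar trees -/
abbrev TA := TensorAlgebra ℝ (NDTree →₀ ℝ)

open scoped Classical in
/-- a non-degenerate planar tree seen as an element of ℱ -/
noncomputable def iotaT (t : PTree) : TA :=
  if h : t.ND then TensorAlgebra.ι ℝ (Finsupp.single (⟨t, h⟩ : NDTree) (1 : ℝ)) else 0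

/-- the coproduct ϖ : ℱ → ℱ ⊗ ℱ, ϖ(b) = Σ_{E ∝ c = b} (E₁ • ⋯ • E_k) ⊗ c -/
noncomputable def cop : TA →ₐ[ℝ] TA ⊗[ℝ] TA :=
  TensorAlgebra.lift ℝ
    ((Finsupp.lift (TA ⊗[ℝ] TA) ℝ NDTree) fun b =>
      ((PTree.decomps b.1).map fun p => ((p.2.map iotaT).prod) ⊗ₜ[ℝ] iotaT p.1).sum)

/-- B₋ : sends ∘ to 0 and B₊(b₁,…,b_m) to b₁ • ⋯ • b_m -/
noncomputable def Bminus : PTree → TA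
  | PTree.node ts => if ts.isEmpty then 0 else (ts.map iotaT).prod

/-- isomorphism of rooted trees (forgetting the planar order) -/
def RIso : PTree → PTree → Prop
  | .node ts, .node ss =>
    ∃ e : Fin ts.length ≃ Fin ss.length, ∀ i : Fin ts.length, RIso (ts.get i) (ss.get (e i))
termination_by b _ => sizeOf b
decreasing_by
  simp only [PTree.node.sizeOf_spec]
  have h : sizeOf (ts.get i) < sizeOf ts :=
    List.sizeOf_lt_of_mem (by exact ts.get_mem i)
  omega

open Matrix in
/-- the solution of −y′ = A*y with y(0) = y⁰ -/
noncomputable def adjSol {n : ℕ} (A : Matrix (Fin n) (Fin n) ℝ) (y0 : Fin n → ℝ) (t : ℝ) :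
    Fin n → ℝ := (NormedSpace.exp ((-t) • Aᵀ)) *ᵥ y0


open Matrix MeasureTheory

section aux
open NormedSpace

attribute [local instance] Matrix.linftyOpNormedAddCommGroup Matrix.linftyOpNormedSpace
  Matrix.linftyOpNormedRing Matrix.linftyOpNormedAlgebra

lemma adjSol_hasDerivAt {n : ℕ} (A : Matrix (Fin n) (Fin n) ℝ) (y0 : Fin n → ℝ) (t : ℝ) :
    HasDerivAt (fun s => adjSol A y0 s) (-(Aᵀ *ᵥ adjSol A y0 t)) t := by
  have h1 : HasDerivAt (fun s : ℝ => NormedSpace.exp ((-s) • Aᵀ))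
      ((-1 : ℝ) • (Aᵀ * NormedSpace.exp ((-t) • Aᵀ))) t :=
    HasDerivAt.scomp t (hasDerivAt_exp_smul_const' Aᵀ (-t)) (hasDerivAt_neg t)
  let ℓ : Matrix (Fin n) (Fin n) ℝ →L[ℝ] (Fin n → ℝ) :=
    LinearMap.toContinuousLinearMap
      { toFun := fun M => M *ᵥ y0
        map_add' := fun M N => Matrix.add_mulVec M N y0
        map_smul' := fun c M => Matrix.smul_mulVec c M y0 }
  have h2 := ℓ.hasFDerivAt.comp_hasDerivAt t h1
  have h3 : HasDerivAt (fun s => adjSol A y0 s)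
      (ℓ ((-1 : ℝ) • (Aᵀ * NormedSpace.exp ((-t) • Aᵀ)))) t := h2
  convert h3 using 1
  show -(Aᵀ *ᵥ adjSol A y0 t) = ((-1 : ℝ) • (Aᵀ * NormedSpace.exp ((-t) • Aᵀ))) *ᵥ y0
  simp [adjSol, Matrix.neg_mulVec, Matrix.mulVec_mulVec]

lemma exp_neg_smul_mulVec {n : ℕ} (A : Matrix (Fin n) (Fin n) ℝ) (T : ℝ) (w : Fin n → ℝ) :
    adjSol A (NormedSpace.exp (T • Aᵀ) *ᵥ w) T = w := by
  have hc : Commute ((-T) • Aᵀ) (T • Aᵀ) := ((Commute.refl Aᵀ).smul_right T).smul_left (-T)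
  have hz : ((-T) • Aᵀ + T • Aᵀ) = (0 : Matrix (Fin n) (Fin n) ℝ) := by
    rw [← add_smul]; simp
  rw [adjSol, Matrix.mulVec_mulVec, ← Matrix.exp_add_of_commute _ _ hc, hz,
    NormedSpace.exp_zero, Matrix.one_mulVec]

end aux


/-- if ⟨y(0), x⁰⟩ + ∫₀ᵀ ⟨y, Bv⟩ = 0 for every solution y of −y′ = A*y,
then the solution x of x′ = Ax + Bv, x(0) = x⁰ satisfies x(T) = 0. -/
theorem control_drives_to_zero (n m : ℕ) (A : Matrix (Fin n) (Fin n) ℝ)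
    (B : Matrix (Fin n) (Fin m) ℝ) (T : ℝ) (hT : 0 < T) (x0 : Fin n → ℝ)
    (v : ℝ → Fin m → ℝ) (hv : MemLp v 2 (volume.restrict (Set.Ioc 0 T)))
    (x : ℝ → Fin n → ℝ) (hx0 : x 0 = x0)
    (hx : ∀ t : ℝ, HasDerivAt x (A *ᵥ x t + B *ᵥ v t) t)
    (hdual : ∀ y0 : Fin n → ℝ,
      (∑ i, adjSol A y0 0 i * x0 i)
        + (∫ t in (0:ℝ)..T, ∑ i, adjSol A y0 t i * (B *ᵥ v t) i) = 0) :
    x T = 0 := by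
  have key : ∀ y0 : Fin n → ℝ, ∑ i, adjSol A y0 T i * x T i = 0 := by
    intro y0
    have hyd : ∀ t (i : Fin n), HasDerivAt (fun s => adjSol A y0 s i)
        (-(Aᵀ *ᵥ adjSol A y0 t) i) t :=
      fun t i => (hasDerivAt_pi.1 (adjSol_hasDerivAt A y0 t)) i
    have hxd : ∀ t (i : Fin n), HasDerivAt (fun s => x s i) ((A *ᵥ x t + B *ᵥ v t) i) t :=
      fun t i => (hasDerivAt_pi.1 (hx t)) i
    have hgd : ∀ t, HasDerivAt (fun s => ∑ i, adjSol A y0 s i * x s i)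
        (∑ i, adjSol A y0 t i * (B *ᵥ v t) i) t := by
      intro t
      have h := HasDerivAt.fun_sum (fun (i : Fin n) (_ : i ∈ Finset.univ) =>
        ((hyd t i).mul (hxd t i)))
      refine h.congr_deriv (Eq.symm ?_)
      have hswap : ∑ i, (Aᵀ *ᵥ adjSol A y0 t) i * x t i
          = ∑ i, adjSol A y0 t i * (A *ᵥ x t) i := by
        simp only [Matrix.mulVec, dotProduct, Matrix.transpose_apply,
          Finset.sum_mul, Finset.mul_sum]
        rw [Finset.sum_comm]
        exact Finset.sum_congr rfl fun i _ => Finset.sum_congr rfl fun j _ => by ring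
      rw [← sub_eq_zero, ← Finset.sum_sub_distrib]
      have hterm : ∀ i ∈ (Finset.univ : Finset (Fin n)),
          adjSol A y0 t i * (B *ᵥ v t) i
            - (-(Aᵀ *ᵥ adjSol A y0 t) i * x t i
              + adjSol A y0 t i * (A *ᵥ x t + B *ᵥ v t) i)
          = (Aᵀ *ᵥ adjSol A y0 t) i * x t i - adjSol A y0 t i * (A *ᵥ x t) i := by
        intro i _
        simp only [Pi.add_apply]
        ring
      rw [Finset.sum_congr rfl hterm, Finset.sum_sub_distrib, hswap, sub_self]
    have hcont : ∀ i : Fin n, Continuous fun t => adjSol A y0 t i := fun i =>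
      continuous_iff_continuousAt.2 fun t => (hyd t i).continuousAt
    haveI : IsFiniteMeasure (volume.restrict (Set.Ioc (0:ℝ) T)) :=
      ⟨by rw [Measure.restrict_apply_univ]; exact measure_Ioc_lt_top⟩
    have hvj : ∀ j : Fin m, IntervalIntegrable (fun t => v t j) volume 0 T := by
      intro j
      have h1 : MemLp (fun t => v t j) 2 (volume.restrict (Set.Ioc 0 T)) :=
        (ContinuousLinearMap.proj j : (Fin m → ℝ) →L[ℝ] ℝ).comp_memLp' hv
      have h2 : Integrable (fun t => v t j) (volume.restrict (Set.Ioc 0 T)) :=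
        memLp_one_iff_integrable.1 (h1.mono_exponent (by norm_num))
      rw [intervalIntegrable_iff, Set.uIoc_of_le hT.le]
      exact h2
    have hint : IntervalIntegrable (fun t => ∑ i, adjSol A y0 t i * (B *ᵥ v t) i) volume 0 T := by
      have hrw : (fun t => ∑ i, adjSol A y0 t i * (B *ᵥ v t) i)
          = ∑ i : Fin n, ∑ j : Fin m, fun t => adjSol A y0 t i * (B i j * v t j) := by
        funext t
        simp only [Finset.sum_apply]
        refine Finset.sum_congr rfl fun i _ => ?_
        rw [← Finset.mul_sum]
        rfl
      rw [hrw]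
      refine IntervalIntegrable.sum _ fun i _ => IntervalIntegrable.sum _ fun j _ => ?_
      exact ((hvj j).const_mul (B i j)).continuousOn_mul (hcont i).continuousOn
    have hftc := intervalIntegral.integral_eq_sub_of_hasDerivAt
      (f := fun s => ∑ i, adjSol A y0 s i * x s i) (fun t _ => hgd t) hint
    have hd := hdual y0
    rw [hftc] at hd
    have h00 : adjSol A y0 0 = y0 := by
      simp [adjSol]
    have hg0 : ∑ i, adjSol A y0 0 i * x 0 i = ∑ i, adjSol A y0 0 i * x0 i := by
      rw [hx0]
    linarith [hg0, hd]
  have hw : ∀ w : Fin n → ℝ, ∑ i, w i * x T i = 0 := by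
    intro w
    have hkey := key (NormedSpace.exp (T • Aᵀ) *ᵥ w)
    rwa [exp_neg_smul_mulVec] at hkey
  funext i
  have := hw (Pi.single i 1)
  simpa [Pi.single_apply, Finset.sum_ite_eq, ite_mul] using this
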